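/- Let n ≥ 2 and m ≥ 2n+2 be integers with m even. Let G = K_1 + m·K_{2n+1}, the graph obtained by joining a single vertex v to all vertices of m disjoint copies of K_{2n+1}. Then G has odd order, minimum degree 2n+1, G contains a spanning subgraph F with d_F(u) ∈ {1,3,...,2n−1,2n} for all vertices u, but the condition o(G − S) ≤ 2n|S| fails for S = {v}. -/

import Mathlib

open SimpleGraph

/-- Number of odd-order components of `G - S`. -/
noncomputable def oddComp {V : Type*} [Fintype V] (G : SimpleGraph V) (S : Set V) : ℕ :=
  Nat.card {c : (G.induce Sᶜ).ConnectedComponent // Odd (Nat.card c.supp)}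

/-- Degree of `v` in `F` (no decidability assumptions). -/
noncomputable def ndeg {V : Type*} (F : SimpleGraph V) (v : V) : ℕ :=
  Nat.card (F.neighborSet v)

/-- Base relation for `K_1 + m·K_{2n+1}`: an apex vertex joined to all vertices of
`m` disjoint copies of `K_{2n+1}`. -/
def joinRel (m n : ℕ) :
    Option (Fin m × Fin (2 * n + 1)) → Option (Fin m × Fin (2 * n + 1)) → Prop
  | some p, some q => p.1 = q.1
  | none, some _ => True
  | _, _ => False

/-!
Removing the apex `v` leaves the `m` cliques `K_{2n+1}` as the components, all of odd order,
so `o(G - v) = m > 2n`. An `H_n`-factor is obtained by fixing a vertex `a` of one clique and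
deleting every edge between `{v, a}` and the rest of the graph: `v` and `a` keep degree `1`,
the other `2n` vertices of the clique of `a` drop to degree `2n - 1`, and all remaining clique
vertices have degree `2n`.
-/

theorem card_preimage_fst_singleton {ι κ : Type*} (i : ι) :
    Nat.card (Prod.fst ⁻¹' {i} : Set (ι × κ)) = Nat.card κ :=
  Nat.card_congr
    { toFun := fun q => q.1.2
      invFun := fun j => ⟨(i, j), rfl⟩
      left_inv := fun ⟨⟨_, _⟩, rfl⟩ => rfl
      right_inv := fun _ => rfl }

namespace SimpleGraph

section CliqueUnion

variable {V ι κ : Type*} {H : SimpleGraph V} {f : V → ι}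

theorem reachable_iff_of_adj_iff (hf : ∀ u v, H.Adj u v ↔ u ≠ v ∧ f u = f v) {u v : V} :
    H.Reachable u v ↔ f u = f v := by
  constructor
  · rintro ⟨w⟩
    induction w with
    | nil => rfl
    | cons hadj _ ih => exact ((hf _ _).1 hadj).2.trans ih
  · intro h
    by_cases huv : u = v
    · exact huv ▸ Reachable.refl u
    · exact ((hf u v).2 ⟨huv, h⟩).reachable

theorem supp_connectedComponentMk_of_adj_iff (hf : ∀ u v, H.Adj u v ↔ u ≠ v ∧ f u = f v)
    (v : V) : (H.connectedComponentMk v).supp = f ⁻¹' {f v} := by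
  ext u
  simp only [ConnectedComponent.mem_supp_iff, ConnectedComponent.eq,
    reachable_iff_of_adj_iff hf, Set.mem_preimage, Set.mem_singleton_iff]

theorem card_connectedComponent_of_adj_iff (hf : ∀ u v, H.Adj u v ↔ u ≠ v ∧ f u = f v)
    (hsurj : f.Surjective) : Nat.card H.ConnectedComponent = Nat.card ι := by
  refine Nat.card_eq_of_bijective
    (ConnectedComponent.lift f fun _ _ p _ => (reachable_iff_of_adj_iff hf).1 p.reachable) ⟨?_, ?_⟩
  · rintro ⟨u⟩ ⟨v⟩ h
    exact ConnectedComponent.sound ((reachable_iff_of_adj_iff hf).2 h)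
  · intro i
    obtain ⟨v, rfl⟩ := hsurj i
    exact ⟨H.connectedComponentMk v, rfl⟩

theorem card_odd_connectedComponent_of_adj_iff (e : V ≃ ι × κ)
    (he : ∀ u v, H.Adj u v ↔ u ≠ v ∧ (e u).1 = (e v).1) (hκ : Odd (Nat.card κ)) :
    Nat.card {c : H.ConnectedComponent // Odd (Nat.card c.supp)} = Nat.card ι := by
  have : Nonempty κ := (Nat.card_pos_iff.1 hκ.pos).1
  have hodd : ∀ c : H.ConnectedComponent, Odd (Nat.card c.supp) := by
    intro c
    induction c using ConnectedComponent.ind with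
    | h v =>
      rw [supp_connectedComponentMk_of_adj_iff he]
      convert hκ using 1
      exact (Nat.card_congr (e.subtypeEquiv fun _ => Iff.rfl)).trans (card_preimage_fst_singleton _)
  rw [Nat.card_congr (Equiv.subtypeUnivEquiv hodd)]
  refine card_connectedComponent_of_adj_iff he fun i => ?_
  obtain ⟨j⟩ := ‹Nonempty κ›
  exact ⟨e.symm (i, j), by simp⟩

end CliqueUnion

section DeleteCut

variable {V : Type*} (G : SimpleGraph V) (P : Set V)

def deleteCut : SimpleGraph V where
  Adj x y := G.Adj x y ∧ (x ∈ P ↔ y ∈ P)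
  symm := ⟨fun _ _ h => ⟨h.1.symm, h.2.symm⟩⟩
  loopless := ⟨fun x h => G.loopless.irrefl x h.1⟩

variable {G P}

theorem deleteCut_le : G.deleteCut P ≤ G := fun _ _ h => h.1

theorem neighborSet_deleteCut_of_mem {v : V} (hv : v ∈ P) :
    (G.deleteCut P).neighborSet v = G.neighborSet v ∩ P := by
  ext w
  simp [deleteCut, hv]

theorem neighborSet_deleteCut_of_notMem {v : V} (hv : v ∉ P) :
    (G.deleteCut P).neighborSet v = G.neighborSet v \ P := by
  ext w
  simp [deleteCut, hv]

theorem ndeg_deleteCut_pair_of_adj {x y : V} (h : G.Adj x y) :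
    ndeg (G.deleteCut {x, y}) x = 1 := by
  have : G.neighborSet x ∩ {x, y} = {y} := by
    ext w
    constructor
    · rintro ⟨hw, rfl | rfl⟩
      · exact absurd hw (G.loopless.irrefl _)
      · rfl
    · rintro rfl
      exact ⟨h, by simp⟩
  rw [ndeg, neighborSet_deleteCut_of_mem (by simp), this, Nat.card_unique]

theorem ndeg_deleteCut_of_notMem {v : V} (hv : v ∉ P) (hfin : (G.neighborSet v).Finite) :
    ndeg (G.deleteCut P) v = ndeg G v - (G.neighborSet v ∩ P).ncard := by
  rw [ndeg, ndeg, neighborSet_deleteCut_of_notMem hv, Nat.card_coe_set_eq, Nat.card_coe_set_eq,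
    ← Set.ncard_inter_add_ncard_sdiff_eq_ncard _ P hfin, Nat.add_sub_cancel_left]

end DeleteCut

end SimpleGraph

section Join

variable {m n : ℕ}

theorem joinRel_adj_some_some {p q : Fin m × Fin (2 * n + 1)} :
    (fromRel (joinRel m n)).Adj (some p) (some q) ↔ p ≠ q ∧ p.1 = q.1 := by
  simp [joinRel, eq_comm]

theorem joinRel_adj_none_some (q : Fin m × Fin (2 * n + 1)) :
    (fromRel (joinRel m n)).Adj none (some q) := by
  simp [joinRel]

theorem neighborSet_joinRel_none : (fromRel (joinRel m n)).neighborSet none = Set.range some := by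
  ext (_ | q)
  · simp
  · simpa using joinRel_adj_none_some q

theorem neighborSet_joinRel_some (p : Fin m × Fin (2 * n + 1)) :
    (fromRel (joinRel m n)).neighborSet (some p) =
      insert none (some '' ((Prod.fst ⁻¹' {p.1}) \ {p})) := by
  ext (_ | q)
  · simpa using (joinRel_adj_none_some p).symm
  · rw [mem_neighborSet, joinRel_adj_some_some]
    simp [eq_comm, and_comm]

theorem ndeg_joinRel_none : ndeg (fromRel (joinRel m n)) none = m * (2 * n + 1) := by
  rw [ndeg, neighborSet_joinRel_none, Nat.card_range_of_injective (Option.some_injective _)]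
  simp

theorem ndeg_joinRel_some (p : Fin m × Fin (2 * n + 1)) :
    ndeg (fromRel (joinRel m n)) (some p) = 2 * n + 1 := by
  rw [ndeg, neighborSet_joinRel_some, Nat.card_coe_set_eq, Set.ncard_insert_of_notMem (by simp),
    Set.ncard_image_of_injective _ (Option.some_injective _),
    Set.ncard_sdiff_singleton_of_mem (show p ∈ Prod.fst ⁻¹' {p.1} from rfl), ← Nat.card_coe_set_eq,
    card_preimage_fst_singleton]
  simp

end Join

section Factor

/-- The degree set `H_n = {1, 3, ..., 2n - 1, 2n}`. -/
def degreeSetH (n : ℕ) : Set ℕ := {d | (Odd d ∧ d ≤ 2 * n - 1) ∨ d = 2 * n}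

variable {m n : ℕ}

theorem ncard_neighborSet_joinRel_inter_pair {p p₀ : Fin m × Fin (2 * n + 1)} (hp : p ≠ p₀) :
    ((fromRel (joinRel m n)).neighborSet (some p) ∩ {none, some p₀}).ncard =
      if p.1 = p₀.1 then 2 else 1 := by
  split_ifs with h
  · rw [Set.inter_eq_right.2, Set.ncard_pair (Option.some_ne_none _).symm]
    rintro _ (rfl | rfl)
    · exact (joinRel_adj_none_some p).symm
    · exact joinRel_adj_some_some.2 ⟨hp, h⟩
  · convert Set.ncard_singleton (none : Option (Fin m × Fin (2 * n + 1)))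
    ext (_ | q)
    · simpa using (joinRel_adj_none_some p).symm
    · simp only [Set.mem_inter_iff, mem_neighborSet, joinRel_adj_some_some, Set.mem_insert_iff,
        Set.mem_singleton_iff, reduceCtorEq, false_or, Option.some.injEq, iff_false]
      rintro ⟨⟨-, hpq⟩, rfl⟩
      exact h hpq

theorem ndeg_deleteCut_joinRel_mem (hn : 1 ≤ n) (p₀ : Fin m × Fin (2 * n + 1))
    (u : Option (Fin m × Fin (2 * n + 1))) :
    ndeg ((fromRel (joinRel m n)).deleteCut {none, some p₀}) u ∈ degreeSetH n := by
  rcases u with _ | p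
  · rw [ndeg_deleteCut_pair_of_adj (joinRel_adj_none_some p₀)]
    exact Or.inl ⟨odd_one, by omega⟩
  by_cases hp : p = p₀
  · subst hp
    rw [Set.pair_comm, ndeg_deleteCut_pair_of_adj (joinRel_adj_none_some p).symm]
    exact Or.inl ⟨odd_one, by omega⟩
  have hv : some p ∉ ({none, some p₀} : Set _) := by simp [hp]
  rw [ndeg_deleteCut_of_notMem hv (Set.toFinite _), ndeg_joinRel_some,
    ncard_neighborSet_joinRel_inter_pair hp]
  split_ifs
  · exact Or.inl ⟨⟨n - 1, by omega⟩, by omega⟩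
  · exact Or.inr (by omega)

end Factor

section Components

def complNoneEquiv (α : Type*) : ↥({none}ᶜ : Set (Option α)) ≃ α :=
  (Equiv.subtypeEquivRight fun x => by simp [Option.ne_none_iff_isSome]).trans
    (Equiv.optionIsSomeEquiv α)

@[simp]
theorem coe_complNoneEquiv_symm {α : Type*} (a : α) :
    ((complNoneEquiv α).symm a : Option α) = some a :=
  rfl

variable {m n : ℕ}

theorem oddComp_joinRel_none : oddComp (fromRel (joinRel m n)) {none} = m := by
  rw [oddComp, card_odd_connectedComponent_of_adj_iff (complNoneEquiv _), Nat.card_fin]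
  · intro a b
    obtain ⟨p, rfl⟩ := (complNoneEquiv _).symm.surjective a
    obtain ⟨q, rfl⟩ := (complNoneEquiv _).symm.surjective b
    simp only [comap_adj, Function.Embedding.subtype_apply, coe_complNoneEquiv_symm,
      joinRel_adj_some_some, (complNoneEquiv _).symm.injective.ne_iff, Equiv.apply_symm_apply]
  · simp

end Components

/-- The condition `o(G-S) ≤ 2n|S|` is not necessary for an `H_n`-factor. -/
theorem stmt_6 (n m : ℕ) (hn : 2 ≤ n) (hm : 2 * n + 2 ≤ m) (hme : Even m) :
    let G := SimpleGraph.fromRel (joinRel m n)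
    Odd (Fintype.card (Option (Fin m × Fin (2 * n + 1)))) ∧
    (∀ v, 2 * n + 1 ≤ ndeg G v) ∧ (∃ v, ndeg G v = 2 * n + 1) ∧
    (∃ F : SimpleGraph (Option (Fin m × Fin (2 * n + 1))), F ≤ G ∧
        ∀ u, (Odd (ndeg F u) ∧ ndeg F u ≤ 2 * n - 1) ∨ ndeg F u = 2 * n) ∧
    ¬ oddComp G ({none} : Set (Option (Fin m × Fin (2 * n + 1)))) ≤ 2 * n * 1 := by
  intro G
  have hm₀ : 0 < m := by omega
  let p₀ : Fin m × Fin (2 * n + 1) := (⟨0, hm₀⟩, 0)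
  refine ⟨?_, fun v => ?_, ⟨some p₀, ndeg_joinRel_some p₀⟩,
    ⟨_, deleteCut_le, ndeg_deleteCut_joinRel_mem (by omega) p₀⟩, ?_⟩
  · simpa using (hme.mul_right _).add_one
  · rcases v with _ | p
    · rw [ndeg_joinRel_none]
      exact Nat.le_mul_of_pos_left _ hm₀
    · rw [ndeg_joinRel_some]
  · rw [oddComp_joinRel_none]
    omega
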